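/- Let Λ = ℤ[t,t⁻¹] be the ring of Laurent polynomials over ℤ, set s = t + t⁻¹, and let A be the 4×4 matrix over Λ given by A = [[1+s+s², s+s², 1+s, s], [s+s², 1+s+s², s, 1+s], [1+s, s, 2, 0], [s, 1+s, 0, 2]]. Then the determinant of A is a unit of Λ; in other words, A is an invertible matrix over Λ, so the hermitian form on Λ⁴ with Gram matrix A is non-singular. -/

import Mathlib

open LaurentPolynomial Matrix

/-- `s = t + t⁻¹` in `Λ = ℤ[t,t⁻¹]`. -/
noncomputable def sLaurent : LaurentPolynomial ℤ := T 1 + T (-1)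

/-- The Hambleton–Teichner matrix `A` over `Λ = ℤ[t,t⁻¹]`. -/
noncomputable def HTmatrix : Matrix (Fin 4) (Fin 4) (LaurentPolynomial ℤ) :=
  let s := sLaurent
  !![1 + s + s ^ 2, s + s ^ 2, 1 + s, s;
     s + s ^ 2, 1 + s + s ^ 2, s, 1 + s;
     1 + s, s, 2, 0;
     s, 1 + s, 0, 2]

lemma HTmatrix_det_eq_one : HTmatrix.det = 1 := by
  simp [HTmatrix, Matrix.det_succ_row_zero, Fin.sum_univ_succ, Fin.succAbove]
  ring

/-- The determinant of the Hambleton–Teichner matrix `A` is a unit of `Λ = ℤ[t,t⁻¹]`;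
equivalently `A` is invertible over `Λ`, so the hermitian form on `Λ⁴` with Gram
matrix `A` is non-singular. -/
theorem HTmatrix_det_isUnit : IsUnit HTmatrix.det ∧ IsUnit HTmatrix := by
  have h := HTmatrix_det_eq_one
  exact ⟨h ▸ isUnit_one, (Matrix.isUnit_iff_isUnit_det _).mpr (h ▸ isUnit_one)⟩
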